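/- arXiv:2208.11309 — 2 statements merged into one kernel-verified Lean document; each statement's English description precedes it below -/
import Mathlib

section
/- Let k ≥ 1 be an integer, M a finite multiset of nonnegative reals, and b ≥ 0 a real. Then Ψ̂_k(M ∪ {b}) ≤ (Ψ̂_k({b})^{1/k} + Ψ̂_k(M)^{1/k})^k, where M ∪ {b} is the multiset obtained by adjoining the element b to M and Ψ̂_k({b}) = k!·b^k. -/
/-- `hpoly k l` is the complete homogeneous symmetric polynomial of degree `k`
evaluated at the entries of the list `l`, i.e. the sum of all monomials of
total degree `k` in the elements of `l`. -/
noncomputable def hpoly : ℕ → List ℝ → ℝ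
  | 0, _ => 1
  | _ + 1, [] => 0
  | k + 1, a :: l => a * hpoly k (a :: l) + hpoly (k + 1) l
termination_by k l => (k, l.length)

/-- The `k`-order `Ψ̂`-function of a multiset `M` of reals:
`Ψ̂_k(M) = k! ·` (sum of all monomials of total degree `k` in the elements of `M`).
In particular `Ψ̂_0(M) = 1` and `Ψ̂_k(∅) = 0` for `k ≥ 1`. -/
noncomputable def psiHat (k : ℕ) (M : Multiset ℝ) : ℝ :=
  (Nat.factorial k : ℝ) * hpoly k M.toList

open Finset
open scoped Nat

/-!
`Ψ̂_n(M)` is the `n`-th moment of `∑_{x ∈ M} x E_x` for independent standard exponential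
variables `E_x`, so the inequality is Minkowski's inequality `‖b E + Z‖_k ≤ b ‖E‖_k + ‖Z‖_k`
in disguise. The argument below needs no measures. Expanding in `b`,
`Ψ̂_k(b ::ₘ M) = ∑ᵢ C(k, i) Ψ̂_i({b}) Ψ̂_{k-i}(M)`, and by the binomial theorem it suffices that
`Ψ̂_j(N)^k ≤ Ψ̂_k(N)^j` for `j ≤ k` (Lyapunov's inequality). This follows from log-convexity of
`n ↦ Ψ̂_n(N)`, which is Cauchy–Schwarz once the Hankel matrices of this sequence and of its shift
are Gram matrices. That Gram property holds for `n ↦ n! bⁿ` (Vandermonde's identity) and survives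
binomial convolution, the Gram vectors of the convolution being built on the product index set.
-/

@[simp] lemma hpoly_zero (l : List ℝ) : hpoly 0 l = 1 := by simp [hpoly]

@[simp] lemma hpoly_succ_nil (k : ℕ) : hpoly (k + 1) [] = 0 := by simp [hpoly]

lemma hpoly_succ_cons (k : ℕ) (a : ℝ) (l : List ℝ) :
    hpoly (k + 1) (a :: l) = a * hpoly k (a :: l) + hpoly (k + 1) l := by
  rw [hpoly]

lemma hpoly_cons_eq_sum (a : ℝ) (l : List ℝ) (n : ℕ) :
    hpoly n (a :: l) = ∑ i ∈ range (n + 1), a ^ i * hpoly (n - i) l := by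
  induction n with
  | zero => simp
  | succ n ih =>
    rw [hpoly_succ_cons, ih, mul_sum, sum_range_succ' _ (n + 1)]
    simp only [Nat.succ_sub_succ, pow_succ, pow_zero, one_mul, Nat.sub_zero, mul_assoc,
      mul_left_comm a]

lemma hpoly_singleton (a : ℝ) (n : ℕ) : hpoly n [a] = a ^ n := by
  induction n with
  | zero => simp
  | succ n ih => rw [hpoly_succ_cons, ih, hpoly_succ_nil, pow_succ, add_zero, mul_comm]

lemma sub_mul_hpoly_cons_cons (a b : ℝ) (l : List ℝ) (k : ℕ) :
    (a - b) * hpoly k (a :: b :: l) = a * hpoly k (a :: l) - b * hpoly k (b :: l) := by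
  induction k with
  | zero => simp
  | succ k ih =>
    rw [hpoly_succ_cons, hpoly_succ_cons k a l, hpoly_succ_cons k b l]
    linear_combination a * ih

lemma hpoly_cons_cons_comm (a b : ℝ) (l : List ℝ) (k : ℕ) :
    hpoly k (a :: b :: l) = hpoly k (b :: a :: l) := by
  induction k with
  | zero => simp
  | succ k ih =>
    rw [hpoly_succ_cons k a (b :: l), hpoly_succ_cons k b (a :: l), hpoly_succ_cons k a l,
      hpoly_succ_cons k b l]
    linear_combination b * ih + sub_mul_hpoly_cons_cons a b l k

lemma List.Perm.hpoly_eq {l l' : List ℝ} (h : l.Perm l') (k : ℕ) : hpoly k l = hpoly k l' := by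
  induction h generalizing k with
  | nil => rfl
  | cons x _ ih => simp only [hpoly_cons_eq_sum, ih]
  | swap x y l => exact hpoly_cons_cons_comm y x l k
  | trans _ _ ih₁ ih₂ => rw [ih₁, ih₂]

noncomputable def binomConv (f g : ℕ → ℝ) (n : ℕ) : ℝ :=
  ∑ i ∈ range (n + 1), (n.choose i : ℝ) * f i * g (n - i)

lemma binomConv_succ (f g : ℕ → ℝ) (n : ℕ) :
    binomConv f g (n + 1) =
      binomConv f (fun t => g (t + 1)) n + binomConv (fun t => f (t + 1)) g n := by
  simp only [binomConv, mul_assoc]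
  rw [sum_choose_succ_mul (fun i r => f i * g r) n]
  congr 1
  refine sum_congr rfl fun i hi => ?_
  rw [Nat.sub_add_comm (mem_range_succ_iff.mp hi)]

lemma sum_range_choose_mul_succ (n : ℕ) (G : ℕ → ℝ) :
    ∑ i ∈ range (n + 2), ((n + 1).choose i : ℝ) * G i =
      ∑ i ∈ range (n + 1), (n.choose i : ℝ) * G i +
        ∑ i ∈ range (n + 1), (n.choose i : ℝ) * G (i + 1) :=
  sum_choose_succ_mul (fun i _ => G i) n

lemma sum_choose_mul_sum_choose (p q : ℕ) (F : ℕ → ℝ) :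
    ∑ i ∈ range (p + 1), (p.choose i : ℝ) * ∑ j ∈ range (q + 1), (q.choose j : ℝ) * F (i + j) =
      ∑ u ∈ range (p + q + 1), ((p + q).choose u : ℝ) * F u := by
  induction p generalizing F with
  | zero => simp
  | succ p ih =>
    rw [sum_range_choose_mul_succ p, Nat.add_right_comm p 1 q, sum_range_choose_mul_succ (p + q),
      ← ih, ← ih]
    simp only [Nat.add_right_comm _ 1]

def IsHankelGram (a : ℕ → ℝ) : Prop :=
  ∀ N : ℕ, ∃ (ι : Type) (_ : Fintype ι) (v : ℕ → ι → ℝ),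
    ∀ i ≤ N, ∀ j ≤ N, a (i + j) = ∑ x, v i x * v j x

namespace IsHankelGram

variable {a b : ℕ → ℝ}

lemma add (ha : IsHankelGram a) (hb : IsHankelGram b) : IsHankelGram (a + b) := by
  intro N
  obtain ⟨ι, _, v, hv⟩ := ha N
  obtain ⟨κ, _, w, hw⟩ := hb N
  refine ⟨ι ⊕ κ, inferInstance, fun i => Sum.elim (v i) (w i), fun i hi j hj => ?_⟩
  simp [Fintype.sum_sum_type, hv i hi j hj, hw i hi j hj]

lemma const_mul {c : ℝ} (hc : 0 ≤ c) (ha : IsHankelGram a) : IsHankelGram (fun n => c * a n) := by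
  intro N
  obtain ⟨ι, _, v, hv⟩ := ha N
  refine ⟨ι, inferInstance, fun i x => √c * v i x, fun i hi j hj => ?_⟩
  show c * a (i + j) = ∑ x, √c * v i x * (√c * v j x)
  rw [hv i hi j hj, mul_sum]
  refine sum_congr rfl fun x _ => ?_
  rw [mul_mul_mul_comm, Real.mul_self_sqrt hc]

lemma binomConv (ha : IsHankelGram a) (hb : IsHankelGram b) : IsHankelGram (binomConv a b) := by
  intro N
  obtain ⟨ι, _, v, hv⟩ := ha N
  obtain ⟨κ, _, w, hw⟩ := hb N
  refine ⟨ι × κ, inferInstance,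
    fun p z => ∑ i ∈ range (p + 1), (p.choose i : ℝ) * v i z.1 * w (p - i) z.2,
    fun p hp q hq => ?_⟩
  calc _ = ∑ i ∈ range (p + 1), (p.choose i : ℝ) * ∑ j ∈ range (q + 1),
          (q.choose j : ℝ) * (a (i + j) * b (p - i + (q - j))) := by
        simp only [_root_.binomConv, mul_assoc]
        rw [← sum_choose_mul_sum_choose p q (fun u => a u * b (p + q - u))]
        refine sum_congr rfl fun i hi => congr_arg _ (sum_congr rfl fun j hj => ?_)
        rw [mem_range] at hi hj
        rw [show p + q - (i + j) = p - i + (q - j) by omega]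
    _ = ∑ i ∈ range (p + 1), (p.choose i : ℝ) * ∑ j ∈ range (q + 1),
          (q.choose j : ℝ) * ((∑ x, v i x * v j x) * ∑ y, w (p - i) y * w (q - j) y) := by
        refine sum_congr rfl fun i hi => congr_arg _ (sum_congr rfl fun j hj => ?_)
        rw [mem_range] at hi hj
        rw [hv i (by omega) j (by omega), hw (p - i) (by omega) (q - j) (by omega)]
    _ = _ := by
        symm
        simp only [sum_mul_sum (range (p + 1))]
        rw [sum_comm]
        refine sum_congr rfl fun i _ => ?_
        rw [sum_comm, mul_sum]
        refine sum_congr rfl fun j _ => ?_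
        simp only [Fintype.sum_prod_type, sum_mul, mul_sum]
        rw [sum_comm]
        exact sum_congr rfl fun x _ => sum_congr rfl fun y _ => by ring

lemma sq_le_mul (ha : IsHankelGram a) (p q : ℕ) : a (p + q) ^ 2 ≤ a (p + p) * a (q + q) := by
  obtain ⟨ι, _, v, hv⟩ := ha (max p q)
  rw [hv p (le_max_left p q) q (le_max_right p q), hv p (le_max_left p q) p (le_max_left p q),
    hv q (le_max_right p q) q (le_max_right p q)]
  simpa only [sq] using sum_mul_sq_le_sq_mul_sq univ (v p) (v q)

lemma nonneg_add_self (ha : IsHankelGram a) (p : ℕ) : 0 ≤ a (p + p) := by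
  obtain ⟨ι, _, v, hv⟩ := ha p
  rw [hv p le_rfl p le_rfl]
  exact sum_nonneg fun x _ => mul_self_nonneg _

end IsHankelGram

lemma sum_range_choose_mul_choose {i j N : ℕ} (hj : j ≤ N) :
    ∑ k ∈ range (N + 1), i.choose k * j.choose k = (i + j).choose j := by
  rw [Nat.add_choose_eq, Nat.sum_antidiagonal_eq_sum_range_succ_mk,
    ← sum_subset (range_subset_range.2 (by omega : j + 1 ≤ N + 1))]
  · exact sum_congr rfl fun k hk => by rw [Nat.choose_symm (mem_range_succ_iff.mp hk)]
  · intro k _ hk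
    rw [Nat.choose_eq_zero_of_lt (show j < k by simpa using hk), mul_zero]

lemma isHankelGram_factorial_mul_pow (b : ℝ) : IsHankelGram (fun n => (n ! : ℝ) * b ^ n) := by
  intro N
  refine ⟨Fin (N + 1), inferInstance, fun i k => i ! * i.choose k * b ^ i, fun i _ j hj => ?_⟩
  have h := Nat.choose_mul_factorial_mul_factorial (Nat.le_add_left j i)
  rw [Nat.add_sub_cancel] at h
  show ((i + j)! : ℝ) * b ^ (i + j) = _
  rw [Fin.sum_univ_eq_sum_range
      (fun k => (i ! * i.choose k * b ^ i : ℝ) * (j ! * j.choose k * b ^ j)),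
    ← h, ← sum_range_choose_mul_choose hj]
  push_cast
  simp only [sum_mul]
  exact sum_congr rfl fun k _ => by ring

lemma succ_factorial_mul_pow_succ_eq_mul_binomConv (b : ℝ) (n : ℕ) :
    ((n + 1)! : ℝ) * b ^ (n + 1) =
      b * binomConv (fun i => (i ! : ℝ) * b ^ i) (fun i => (i ! : ℝ) * b ^ i) n := by
  have term : ∀ i ∈ range (n + 1),
      (n.choose i : ℝ) * (i ! * b ^ i) * ((n - i)! * b ^ (n - i)) = n ! * b ^ n := by
    intro i hi
    rw [← pow_mul_pow_sub b (mem_range_succ_iff.mp hi),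
      ← Nat.choose_mul_factorial_mul_factorial (mem_range_succ_iff.mp hi)]
    push_cast
    ring
  rw [binomConv, sum_congr rfl term, sum_const, card_range, nsmul_eq_mul, Nat.factorial_succ]
  push_cast
  ring

/-- A finite form of Stieltjes' condition for `a` to be the moment sequence of a measure
on `[0, ∞)`. -/
def IsStieltjesGram (a : ℕ → ℝ) : Prop := IsHankelGram a ∧ IsHankelGram (fun n => a (n + 1))

namespace IsStieltjesGram

variable {a b : ℕ → ℝ}

lemma binomConv (ha : IsStieltjesGram a) (hb : IsStieltjesGram b) :
    IsStieltjesGram (binomConv a b) := by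
  refine ⟨ha.1.binomConv hb.1, ?_⟩
  simp only [binomConv_succ]
  exact (ha.1.binomConv hb.2).add (ha.2.binomConv hb.1)

lemma nonneg (ha : IsStieltjesGram a) (n : ℕ) : 0 ≤ a n := by
  obtain ⟨t, rfl | rfl⟩ := Nat.even_or_odd' n
  · simpa only [two_mul] using ha.1.nonneg_add_self t
  · simpa only [two_mul] using ha.2.nonneg_add_self t

lemma sq_le_mul (ha : IsStieltjesGram a) (n : ℕ) : a (n + 1) ^ 2 ≤ a n * a (n + 2) := by
  obtain ⟨t, rfl | rfl⟩ := Nat.even_or_odd' n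
  · have h := ha.1.sq_le_mul t (t + 1)
    ring_nf at h ⊢
    exact h
  · have h := ha.2.sq_le_mul t (t + 1)
    ring_nf at h ⊢
    exact h

end IsStieltjesGram

lemma isStieltjesGram_factorial_mul_pow {b : ℝ} (hb : 0 ≤ b) :
    IsStieltjesGram (fun n => (n ! : ℝ) * b ^ n) := by
  have h := isHankelGram_factorial_mul_pow b
  refine ⟨h, ?_⟩
  convert (h.binomConv h).const_mul hb using 1
  exact funext (succ_factorial_mul_pow_succ_eq_mul_binomConv b)

lemma pow_succ_le_pow_of_sq_le_mul {a : ℕ → ℝ} (h0 : a 0 = 1) (hnn : ∀ n, 0 ≤ a n)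
    (hlc : ∀ n, a (n + 1) ^ 2 ≤ a n * a (n + 2)) (k : ℕ) : a k ^ (k + 1) ≤ a (k + 1) ^ k := by
  induction k with
  | zero => simp [h0]
  | succ k ih =>
    rcases (hnn (k + 1)).eq_or_lt with hz | hpos
    · rw [← hz, zero_pow (by omega)]
      exact pow_nonneg (hnn _) _
    refine le_of_mul_le_mul_right ?_ (pow_pos hpos k)
    calc a (k + 1) ^ (k + 1 + 1) * a (k + 1) ^ k = (a (k + 1) ^ 2) ^ (k + 1) := by ring
      _ ≤ (a k * a (k + 2)) ^ (k + 1) := by gcongr; exact hlc k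
      _ = a k ^ (k + 1) * a (k + 2) ^ (k + 1) := mul_pow _ _ _
      _ ≤ a (k + 1) ^ k * a (k + 2) ^ (k + 1) := by gcongr; exact pow_nonneg (hnn _) _
      _ = a (k + 1 + 1) ^ (k + 1) * a (k + 1) ^ k := by ring

lemma pow_le_pow_of_sq_le_mul {a : ℕ → ℝ} (h0 : a 0 = 1) (hnn : ∀ n, 0 ≤ a n)
    (hlc : ∀ n, a (n + 1) ^ 2 ≤ a n * a (n + 2)) {j k : ℕ} (hjk : j ≤ k) :
    a j ^ k ≤ a k ^ j := by
  rcases Nat.eq_zero_or_pos j with rfl | hj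
  · simp [h0]
  induction k with
  | zero => omega
  | succ k ih =>
    rcases hjk.eq_or_lt with rfl | hlt
    · rfl
    have hjk' : j ≤ k := by omega
    refine (pow_le_pow_iff_left₀ (pow_nonneg (hnn _) _) (pow_nonneg (hnn _) _)
      (by omega : k ≠ 0)).mp ?_
    calc (a j ^ (k + 1)) ^ k = (a j ^ k) ^ (k + 1) := by ring
      _ ≤ (a k ^ j) ^ (k + 1) := by gcongr; exacts [pow_nonneg (hnn _) _, ih hjk']
      _ = (a k ^ (k + 1)) ^ j := by ring
      _ ≤ (a (k + 1) ^ k) ^ j := by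
        gcongr
        · exact pow_nonneg (hnn _) _
        · exact pow_succ_le_pow_of_sq_le_mul h0 hnn hlc k
      _ = (a (k + 1) ^ j) ^ k := by ring

lemma le_rpow_one_div_pow_of_pow_le {c C : ℝ} (hc : 0 ≤ c) (hC : 0 ≤ C) {j k : ℕ} (hk : k ≠ 0)
    (h : c ^ k ≤ C ^ j) : c ≤ (C ^ (1 / (k : ℝ))) ^ j := by
  have hroot : ((C ^ (1 / (k : ℝ))) ^ j) ^ k = C ^ j := by
    rw [← pow_mul, mul_comm, pow_mul, one_div, Real.rpow_inv_natCast_pow hC hk]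
  exact (pow_le_pow_iff_left₀ hc (by positivity) hk).mp (h.trans_eq hroot.symm)

lemma psiHat_zero (M : Multiset ℝ) : psiHat 0 M = 1 := by simp [psiHat]

lemma psiHat_empty (n : ℕ) : psiHat n 0 = n ! * 0 ^ n := by
  cases n <;> simp [psiHat]

lemma psiHat_singleton (b : ℝ) (n : ℕ) : psiHat n {b} = n ! * b ^ n := by
  rw [psiHat, Multiset.toList_singleton, hpoly_singleton]

lemma psiHat_cons (b : ℝ) (M : Multiset ℝ) (n : ℕ) :
    psiHat n (b ::ₘ M) = binomConv (fun i => psiHat i {b}) (fun i => psiHat i M) n := by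
  have hperm : (b ::ₘ M).toList.Perm (b :: M.toList) :=
    Multiset.coe_eq_coe.mp (by rw [Multiset.coe_toList, ← Multiset.cons_coe, Multiset.coe_toList])
  rw [psiHat, hperm.hpoly_eq, hpoly_cons_eq_sum, mul_sum, binomConv]
  refine sum_congr rfl fun i hi => ?_
  rw [psiHat_singleton, psiHat,
    ← Nat.choose_mul_factorial_mul_factorial (mem_range_succ_iff.mp hi)]
  push_cast
  ring

lemma isStieltjesGram_psiHat {M : Multiset ℝ} (hM : ∀ x ∈ M, 0 ≤ x) :
    IsStieltjesGram (fun n => psiHat n M) := by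
  induction M using Multiset.induction_on with
  | empty => simpa only [psiHat_empty] using isStieltjesGram_factorial_mul_pow le_rfl
  | cons b M ih =>
    rw [Multiset.forall_mem_cons] at hM
    have hb : IsStieltjesGram (fun i => psiHat i {b}) := by
      simpa only [psiHat_singleton] using isStieltjesGram_factorial_mul_pow hM.1
    simpa only [psiHat_cons] using hb.binomConv (ih hM.2)

lemma psiHat_le_rpow_pow {M : Multiset ℝ} (hM : ∀ x ∈ M, 0 ≤ x) {j k : ℕ} (hjk : j ≤ k) :
    psiHat j M ≤ (psiHat k M ^ (1 / (k : ℝ))) ^ j := by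
  rcases Nat.eq_zero_or_pos j with rfl | hj
  · simp [psiHat_zero]
  have hS := isStieltjesGram_psiHat hM
  exact le_rpow_one_div_pow_of_pow_le (hS.nonneg j) (hS.nonneg k) (by omega)
    (pow_le_pow_of_sq_le_mul (psiHat_zero M) hS.nonneg hS.sq_le_mul hjk)

theorem psiHat_cons_le_general (k : ℕ) (M : Multiset ℝ) (hM : ∀ x ∈ M, (0:ℝ) ≤ x)
    (b : ℝ) (hb : 0 ≤ b) :
    psiHat k (b ::ₘ M) ≤
      (psiHat k ({b} : Multiset ℝ) ^ (1 / (k : ℝ)) + psiHat k M ^ (1 / (k : ℝ))) ^ k := by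
  have hbM : ∀ x ∈ ({b} : Multiset ℝ), 0 ≤ x := by simpa using hb
  have hX : 0 ≤ psiHat k {b} ^ (1 / (k : ℝ)) :=
    Real.rpow_nonneg ((isStieltjesGram_psiHat hbM).nonneg k) _
  rw [psiHat_cons, binomConv, add_pow]
  refine sum_le_sum fun i hi => ?_
  rw [mul_comm _ (k.choose i : ℝ), ← mul_assoc]
  gcongr
  · exact (isStieltjesGram_psiHat hM).nonneg _
  · exact psiHat_le_rpow_pow hbM (mem_range_succ_iff.mp hi)
  · exact psiHat_le_rpow_pow hM (Nat.sub_le k i)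

/-- Lemma 1(c): for `k ≥ 1`, a finite multiset `M` of nonnegative reals and `b ≥ 0`,
`Ψ̂_k(M ∪ {b}) ≤ (Ψ̂_k({b})^{1/k} + Ψ̂_k(M)^{1/k})^k`. -/
theorem psiHat_cons_le (k : ℕ) (hk : 1 ≤ k) (M : Multiset ℝ) (hM : ∀ x ∈ M, (0:ℝ) ≤ x)
    (b : ℝ) (hb : 0 ≤ b) :
    psiHat k (b ::ₘ M) ≤
      (psiHat k ({b} : Multiset ℝ) ^ (1 / (k : ℝ)) + psiHat k M ^ (1 / (k : ℝ))) ^ k :=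
  psiHat_cons_le_general k M hM b hb
end

section
/- Let Γ be a weighted congestion game fulfilling Conditions 1–2 and Γ̂ its Ψ̂-game. Then for every player u ∈ 𝒩 and every profile S, c_u(S) ≤ ĉ_u(S) ≤ d!·c_u(S). -/
/-- A weighted congestion game with `N` players, `E` resources, polynomial latency
functions of degree at most `d` (Condition 2, with coefficient-ratio bound `A`),
and players' weights in `[1, W]` (Condition 1). -/
structure WCGame (N E d : ℕ) (W A : ℝ) where
  /-- the strategy set of each player: a set of nonempty subsets of resources -/
  strat : Fin N → Set (Finset (Fin E))
  strat_nonempty : ∀ u, (strat u).Nonempty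
  strat_valid : ∀ u, ∀ s ∈ strat u, s.Nonempty
  /-- the weight of each player -/
  w : Fin N → ℝ
  /-- `a e k` is the coefficient of `x^k` in the latency function of resource `e` -/
  a : Fin E → ℕ → ℝ
  hd : 1 ≤ d
  hW : 1 ≤ W
  hw_lower : ∀ u, 1 ≤ w u
  hw_upper : ∀ u, w u ≤ W
  ha_nonneg : ∀ e k, 0 ≤ a e k
  ha_pos : ∀ e, 0 < ∑ k ∈ Finset.range (d + 1), a e k
  hA_pos : 0 < A
  hA_bound : ∀ e e' k k', k ≤ d → k' ≤ d → 0 < a e k → a e' k' ≤ A * a e k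

namespace WCGame

/-- A (pure strategy) profile: a choice of a set of resources for every player. -/
abbrev Profile (N E : ℕ) := Fin N → Finset (Fin E)

variable {N E d : ℕ} {W A : ℝ}

/-- A profile is feasible if every player uses one of her strategies. -/
def IsProfile (G : WCGame N E d W A) (S : Profile N E) : Prop :=
  ∀ u, S u ∈ G.strat u

/-- `U_e(S)`: the multiset of weights of the players using resource `e` in profile `S`. -/
noncomputable def load (G : WCGame N E d W A) (S : Profile N E) (e : Fin E) : Multiset ℝ :=
  (Finset.univ.filter (fun u => e ∈ S u)).val.map G.w

/-- The cost `c_u(S) = w_u · ∑_{e ∈ s_u} ∑_{k=0}^d a_{e,k} · L(U_e(S))^k` of player `u`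
in the original game `Γ`. -/
noncomputable def cost (G : WCGame N E d W A) (S : Profile N E) (u : Fin N) : ℝ :=
  G.w u * ∑ e ∈ S u, ∑ k ∈ Finset.range (d + 1), G.a e k * (G.load S e).sum ^ k

/-- The cost `ĉ_u(S) = w_u · ∑_{e ∈ s_u} ∑_{k=0}^d a_{e,k} · Ψ̂_k(U_e(S))` of player `u`
in the `Ψ̂`-game `Γ̂`. -/
noncomputable def hcost (G : WCGame N E d W A) (S : Profile N E) (u : Fin N) : ℝ :=
  G.w u * ∑ e ∈ S u, ∑ k ∈ Finset.range (d + 1), G.a e k * psiHat k (G.load S e)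

/-- The potential function `Φ̂(S) = ∑_e ∑_{k=0}^d (a_{e,k}/(k+1)) · Ψ̂_{k+1}(U_e(S))`
of the `Ψ̂`-game. -/
noncomputable def potHat (G : WCGame N E d W A) (S : Profile N E) : ℝ :=
  ∑ e : Fin E, ∑ k ∈ Finset.range (d + 1),
    G.a e k / ((k : ℝ) + 1) * psiHat (k + 1) (G.load S e)

/-- The approximate potential function `Φ(S) = ∑_e Ψ_e(L(U_e(S)))` with
`Ψ_e(x) = a_{e,0}·x + ∑_{k=1}^d a_{e,k}·(x^{k+1}/(k+1) + x^k/2)`. -/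
noncomputable def pot (G : WCGame N E d W A) (S : Profile N E) : ℝ :=
  ∑ e : Fin E,
    (G.a e 0 * (G.load S e).sum +
      ∑ k ∈ Finset.Icc 1 d,
        G.a e k * ((G.load S e).sum ^ (k + 1) / ((k : ℝ) + 1) + (G.load S e).sum ^ k / 2))

/-- `S` is a `ρ`-approximate pure Nash equilibrium w.r.t. the player costs `costFn`:
no player can decrease her cost by more than a factor `ρ` by a unilateral deviation. -/
def IsApproxPNE (G : WCGame N E d W A) (costFn : Profile N E → Fin N → ℝ) (ρ : ℝ)
    (S : Profile N E) : Prop :=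
  ∀ u, ∀ s' ∈ G.strat u, costFn S u ≤ ρ * costFn (Function.update S u s') u

/-- `sstar u` is a best response of player `u` to `S₋ᵤ` w.r.t. the costs `costFn`. -/
def IsBestResponses (G : WCGame N E d W A) (costFn : Profile N E → Fin N → ℝ)
    (S : Profile N E) (sstar : Fin N → Finset (Fin E)) : Prop :=
  ∀ u, sstar u ∈ G.strat u ∧
    ∀ s ∈ G.strat u, costFn (Function.update S u (sstar u)) u ≤ costFn (Function.update S u s) u

/-- One step of Algorithm 1 (the `1/(1-ε)` best response dynamic on the `Ψ̂`-game),
moving from profile `S` to profile `S'` by letting the chosen player `ut` (a player with a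
`1/(1-ε)`-move of maximum cost reduction) switch to her best response `sstar ut`. -/
def AlgOneStep (G : WCGame N E d W A) (ε : ℝ) (S S' : Profile N E) (ut : Fin N)
    (sstar : Fin N → Finset (Fin E)) : Prop :=
  G.IsBestResponses G.hcost S sstar ∧
  G.hcost S ut > (1 / (1 - ε)) * G.hcost (Function.update S ut (sstar ut)) ut ∧
  (∀ u, G.hcost S u > (1 / (1 - ε)) * G.hcost (Function.update S u (sstar u)) u →
    G.hcost S ut - G.hcost (Function.update S ut (sstar ut)) ut ≥
      G.hcost S u - G.hcost (Function.update S u (sstar u)) u) ∧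
  S' = Function.update S ut (sstar ut)

/-- One step of Algorithm 2 (the refined `ρ/(1-ε)` best response dynamic on `Γ`),
moving from profile `S` to profile `S'` by letting the chosen player `ut` (a player
maximizing `c_u(S) - ρ·c_u(s_u^*, S₋ᵤ)` among players with `ρ/(1-ε)`-moves) switch to
her best response `sstar ut`. -/
def AlgTwoStep (G : WCGame N E d W A) (ρ ε : ℝ) (S S' : Profile N E) (ut : Fin N)
    (sstar : Fin N → Finset (Fin E)) : Prop :=
  G.IsBestResponses G.cost S sstar ∧
  G.cost S ut > (ρ / (1 - ε)) * G.cost (Function.update S ut (sstar ut)) ut ∧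
  (∀ u, G.cost S u > (ρ / (1 - ε)) * G.cost (Function.update S u (sstar u)) u →
    G.cost S ut - ρ * G.cost (Function.update S ut (sstar ut)) ut ≥
      G.cost S u - ρ * G.cost (Function.update S u (sstar u)) u) ∧
  S' = Function.update S ut (sstar ut)

/-- `c_max`: the maximum cost of a player over all (feasible) profiles in `Γ`. -/
noncomputable def cMax (G : WCGame N E d W A) : ℝ :=
  sSup {x | ∃ S u, G.IsProfile S ∧ x = G.cost S u}

/-- `ĉ_max`: the maximum cost of a player over all (feasible) profiles in `Γ̂`. -/
noncomputable def hcMax (G : WCGame N E d W A) : ℝ :=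
  sSup {x | ∃ S u, G.IsProfile S ∧ x = G.hcost S u}

/-- `Φ̂_min`: the minimum of the potential `Φ̂` over all (feasible) profiles. -/
noncomputable def potHatMin (G : WCGame N E d W A) : ℝ :=
  sInf {x | ∃ S, G.IsProfile S ∧ x = G.potHat S}

/-- `a_min⁺`: the minimum positive coefficient of the latency functions. -/
noncomputable def aMinPos (G : WCGame N E d W A) : ℝ :=
  sInf {x | 0 < x ∧ ∃ e k, k ≤ d ∧ x = G.a e k}

end WCGame

/-!
`Ψ̂_k(M) = k! · h_k(M)`, where `h_k` is the complete homogeneous symmetric polynomial.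
By the multinomial theorem `L(M)^k` is the sum of the same monomials as `h_k(M)`, with
multinomial coefficients between `1` and `k!`; for nonnegative weights this gives
`L(M)^k ≤ Ψ̂_k(M) ≤ k! · L(M)^k`. Summing against the nonnegative coefficients `a_{e,k}`,
`k ≤ d`, yields the bounds for the player costs.
-/

open scoped Nat

theorem hpoly_nonneg : ∀ (k : ℕ) (l : List ℝ), (∀ x ∈ l, 0 ≤ x) → 0 ≤ hpoly k l
  | 0, _, _ => by rw [hpoly]; exact zero_le_one
  | _ + 1, [], _ => by rw [hpoly]
  | k + 1, a :: l, h => by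
    rw [hpoly]
    have := hpoly_nonneg k (a :: l) h
    have := hpoly_nonneg (k + 1) l fun x hx => h x (List.mem_cons_of_mem _ hx)
    have := h a List.mem_cons_self
    positivity
termination_by k l => (k, l.length)

theorem hpoly_one : ∀ l : List ℝ, hpoly 1 l = l.sum
  | [] => by rw [hpoly, List.sum_nil]
  | a :: l => by rw [hpoly, hpoly, hpoly_one l, List.sum_cons, mul_one]

theorem hpoly_le_sum_pow : ∀ (k : ℕ) (l : List ℝ), (∀ x ∈ l, 0 ≤ x) → hpoly k l ≤ l.sum ^ k
  | 0, _, _ => by rw [hpoly, pow_zero]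
  | _ + 1, [], _ => by rw [hpoly, List.sum_nil, zero_pow (Nat.succ_ne_zero _)]
  | k + 1, a :: l, h => by
    have ha := h a List.mem_cons_self
    have hl : ∀ x ∈ l, 0 ≤ x := fun x hx => h x (List.mem_cons_of_mem _ hx)
    have hs : 0 ≤ l.sum := List.sum_nonneg hl
    have ih_cons := hpoly_le_sum_pow k (a :: l) h
    have ih_tail := hpoly_le_sum_pow (k + 1) l hl
    rw [List.sum_cons] at ih_cons ⊢
    rw [pow_succ'] at ih_tail
    rw [hpoly]
    calc a * hpoly k (a :: l) + hpoly (k + 1) l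
        ≤ a * (a + l.sum) ^ k + l.sum * l.sum ^ k := by gcongr
      _ ≤ a * (a + l.sum) ^ k + l.sum * (a + l.sum) ^ k := by gcongr; linarith
      _ = (a + l.sum) ^ (k + 1) := by ring
termination_by k l => (k, l.length)

/-- A discrete form of Euler's identity `∑ xᵢ ∂ᵢ h_{k+1} = (k + 1) h_{k+1}`, using
`∂ᵢ h_{k+1} ≥ h_k` coefficientwise. -/
theorem sum_mul_hpoly_le : ∀ (k : ℕ) (l : List ℝ), (∀ x ∈ l, 0 ≤ x) →
    l.sum * hpoly k l ≤ (k + 1) * hpoly (k + 1) l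
  | k, [], _ => by rw [hpoly, List.sum_nil, zero_mul, mul_zero]
  | 0, a :: l, _ => by rw [hpoly, hpoly_one]; simp
  | k + 1, a :: l, h => by
    have ha := h a List.mem_cons_self
    have hl : ∀ x ∈ l, 0 ≤ x := fun x hx => h x (List.mem_cons_of_mem _ hx)
    have ih_cons := sum_mul_hpoly_le k (a :: l) h
    have ih_tail := sum_mul_hpoly_le (k + 1) l hl
    have := hpoly_nonneg k (a :: l) h
    have h_succ : hpoly (k + 1) (a :: l) = a * hpoly k (a :: l) + hpoly (k + 1) l := by
      rw [hpoly]
    have h_succ_succ :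
        hpoly (k + 2) (a :: l) = a * hpoly (k + 1) (a :: l) + hpoly (k + 2) l := by
      rw [hpoly]
    rw [List.sum_cons, h_succ] at ih_cons
    rw [show k + 1 + 1 = k + 2 from rfl] at ih_tail
    rw [List.sum_cons, h_succ_succ, h_succ]
    push_cast at ih_tail ⊢
    linarith [mul_le_mul_of_nonneg_left ih_cons ha, mul_nonneg (mul_nonneg ha ha) this]
termination_by k l => (k, l.length)

theorem sum_pow_le_factorial_mul_hpoly (k : ℕ) {l : List ℝ} (h : ∀ x ∈ l, 0 ≤ x) :
    l.sum ^ k ≤ k ! * hpoly k l := by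
  induction k with
  | zero => rw [hpoly, pow_zero, Nat.factorial_zero, Nat.cast_one, one_mul]
  | succ k ih =>
    have hs : 0 ≤ l.sum := List.sum_nonneg h
    calc l.sum ^ (k + 1) = l.sum * l.sum ^ k := pow_succ' _ _
      _ ≤ l.sum * (k ! * hpoly k l) := by gcongr
      _ = k ! * (l.sum * hpoly k l) := by ring
      _ ≤ k ! * ((k + 1) * hpoly (k + 1) l) :=
          mul_le_mul_of_nonneg_left (sum_mul_hpoly_le k l h) (by positivity)
      _ = (k + 1)! * hpoly (k + 1) l := by push_cast [Nat.factorial_succ]; ring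

theorem sum_pow_le_psiHat (k : ℕ) {M : Multiset ℝ} (hM : ∀ x ∈ M, 0 ≤ x) :
    M.sum ^ k ≤ psiHat k M := by
  rw [psiHat, ← Multiset.sum_toList]
  exact sum_pow_le_factorial_mul_hpoly k fun x hx => hM x (Multiset.mem_toList.mp hx)

theorem psiHat_le_factorial_mul_sum_pow (k : ℕ) {M : Multiset ℝ} (hM : ∀ x ∈ M, 0 ≤ x) :
    psiHat k M ≤ k ! * M.sum ^ k := by
  rw [psiHat, ← Multiset.sum_toList]
  gcongr
  exact hpoly_le_sum_pow k _ fun x hx => hM x (Multiset.mem_toList.mp hx)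

namespace WCGame

variable {N E d : ℕ} {W A : ℝ} (G : WCGame N E d W A) (S : Profile N E)

theorem w_pos (u : Fin N) : 0 < G.w u := zero_lt_one.trans_le (G.hw_lower u)

theorem load_nonneg (e : Fin E) : ∀ x ∈ G.load S e, 0 ≤ x := by
  intro x hx
  obtain ⟨u, -, rfl⟩ := Multiset.mem_map.mp hx
  exact (G.w_pos u).le

theorem latency_le_hlatency (e : Fin E) :
    ∑ k ∈ Finset.range (d + 1), G.a e k * (G.load S e).sum ^ k ≤
      ∑ k ∈ Finset.range (d + 1), G.a e k * psiHat k (G.load S e) :=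
  Finset.sum_le_sum fun k _ =>
    mul_le_mul_of_nonneg_left (sum_pow_le_psiHat k (G.load_nonneg S e)) (G.ha_nonneg e k)

theorem hlatency_le_factorial_mul_latency (e : Fin E) :
    ∑ k ∈ Finset.range (d + 1), G.a e k * psiHat k (G.load S e) ≤
      d ! * ∑ k ∈ Finset.range (d + 1), G.a e k * (G.load S e).sum ^ k := by
  rw [Finset.mul_sum]
  refine Finset.sum_le_sum fun k hk => ?_
  have hkd : k ! ≤ d ! := Nat.factorial_le (Nat.lt_succ_iff.mp (Finset.mem_range.mp hk))
  have := G.ha_nonneg e k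
  have := Multiset.sum_nonneg (G.load_nonneg S e)
  calc G.a e k * psiHat k (G.load S e)
      ≤ G.a e k * (k ! * (G.load S e).sum ^ k) := by
        gcongr; exact psiHat_le_factorial_mul_sum_pow k (G.load_nonneg S e)
    _ ≤ G.a e k * (d ! * (G.load S e).sum ^ k) := by gcongr
    _ = d ! * (G.a e k * (G.load S e).sum ^ k) := mul_left_comm _ _ _

theorem cost_le_hcost (u : Fin N) : G.cost S u ≤ G.hcost S u :=
  mul_le_mul_of_nonneg_left (Finset.sum_le_sum fun e _ => G.latency_le_hlatency S e)
    (G.w_pos u).le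

theorem hcost_le_factorial_mul_cost (u : Fin N) : G.hcost S u ≤ d ! * G.cost S u := by
  calc G.hcost S u
      ≤ G.w u * ∑ e ∈ S u, d ! * ∑ k ∈ Finset.range (d + 1),
          G.a e k * (G.load S e).sum ^ k :=
        mul_le_mul_of_nonneg_left
          (Finset.sum_le_sum fun e _ => G.hlatency_le_factorial_mul_latency S e) (G.w_pos u).le
    _ = d ! * G.cost S u := by rw [cost, ← Finset.mul_sum, mul_left_comm]

end WCGame

open WCGame in
theorem cost_le_hcost_le_factorial_mul_cost_general {N E d : ℕ} {W A : ℝ}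
    (G : WCGame N E d W A) (S : Profile N E) (u : Fin N) :
    G.cost S u ≤ G.hcost S u ∧ G.hcost S u ≤ (Nat.factorial d : ℝ) * G.cost S u :=
  ⟨G.cost_le_hcost S u, G.hcost_le_factorial_mul_cost S u⟩

open WCGame in
/-- Lemma 3: for every player `u` and every profile `S`, `c_u(S) ≤ ĉ_u(S) ≤ d!·c_u(S)`. -/
theorem cost_le_hcost_le_factorial_mul_cost {N E d : ℕ} {W A : ℝ}
    (G : WCGame N E d W A) (S : Profile N E) (hS : G.IsProfile S) (u : Fin N) :
    G.cost S u ≤ G.hcost S u ∧ G.hcost S u ≤ (Nat.factorial d : ℝ) * G.cost S u :=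
  cost_le_hcost_le_factorial_mul_cost_general G S u
end
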